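/- Let K(t; x, y) = (4πt)^{-n/2} exp(−|x−y|²/(4t)). For every m ≥ 0 and p > 0 there is a constant c_{m,p}, independent of x ∈ ℝⁿ and t > 0, such that ∫₀^t ∫_{ℝⁿ} K(t−s; 0, y) |y|^m K(ps; y, x) dy ds ≤ c_{m,p} t^{1+m/2} K((1+p)t; 0, x). -/

import Mathlib

/-!
Absorb the weight into the kernel: since `r ^ m * exp (-r ^ 2 / σ) ≲ σ ^ (m / 2)`, one has
`K(τ; 0, y) |y|^m ≲ τ^{m/2} K((1+p)τ; 0, y)`. The semigroup property then collapses the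
`y`-integral to `K((1+p)t - s; 0, x)`, and since `(1+p)t - s ≥ pt` this is at most
`((1+p)/p)^{n/2} K((1+p)t; 0, x)`. The resulting bound is uniform in `s ∈ (0, t)`, and
integrating it over `[0, t]` contributes the factor `t`.
-/

open Real MeasureTheory
open scoped Nat

/-- The Euclidean heat kernel on `ℝⁿ`. -/
noncomputable def heatK (n : ℕ) (t : ℝ) (x y : EuclideanSpace ℝ (Fin n)) : ℝ :=
  (4 * π * t) ^ (-(n : ℝ) / 2) * Real.exp (-‖x - y‖ ^ 2 / (4 * t))

theorem pow_mul_exp_neg_sq_le (m : ℕ) (u : ℝ) : u ^ m * exp (-u ^ 2) ≤ 1 + m ! := by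
  have hpow : u ^ m ≤ 1 + (u ^ 2) ^ m := by
    refine (le_abs_self _).trans ?_
    rw [abs_pow, ← sq_abs u, ← pow_mul]
    rcases le_total |u| 1 with hu | hu
    · linarith [pow_le_one₀ (abs_nonneg u) hu (n := m), pow_nonneg (abs_nonneg u) (2 * m)]
    · linarith [pow_le_pow_right₀ hu (show m ≤ 2 * m by omega)]
  have hfac : (u ^ 2) ^ m * exp (-u ^ 2) ≤ m ! := by
    have := pow_div_factorial_le_exp _ (sq_nonneg u) m
    rw [div_le_iff₀ (by positivity)] at this
    calc (u ^ 2) ^ m * exp (-u ^ 2) ≤ exp (u ^ 2) * m ! * exp (-u ^ 2) := by gcongr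
      _ = m ! := by rw [mul_right_comm, ← exp_add, add_neg_cancel, exp_zero, one_mul]
  calc u ^ m * exp (-u ^ 2) ≤ (1 + (u ^ 2) ^ m) * exp (-u ^ 2) := by gcongr
    _ = exp (-u ^ 2) + (u ^ 2) ^ m * exp (-u ^ 2) := by ring
    _ ≤ 1 + m ! := add_le_add (exp_le_one_iff.mpr (by nlinarith)) hfac

theorem pow_mul_exp_neg_sq_div_le (m : ℕ) {σ : ℝ} (hσ : 0 < σ) (r : ℝ) :
    r ^ m * exp (-r ^ 2 / σ) ≤ (1 + m !) * √σ ^ m := by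
  have hs : 0 < √σ := sqrt_pos.mpr hσ
  have hr : r = √σ * (r / √σ) := by field_simp
  have hsq : r ^ 2 / σ = (r / √σ) ^ 2 := by rw [div_pow, sq_sqrt hσ.le]
  calc r ^ m * exp (-r ^ 2 / σ) = √σ ^ m * ((r / √σ) ^ m * exp (-(r / √σ) ^ 2)) := by
        rw [neg_div, hsq]; nth_rw 1 [hr]; ring
    _ ≤ √σ ^ m * (1 + m !) := by gcongr; exact pow_mul_exp_neg_sq_le m _
    _ = (1 + m !) * √σ ^ m := mul_comm _ _

theorem div_rpow_neg {x y : ℝ} (hx : 0 ≤ x) (hy : 0 ≤ y) (k : ℝ) :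
    (x / y) ^ (-k) = x ^ (-k) * y ^ k := by
  rw [div_rpow hx hy, rpow_neg hy, div_inv_eq_mul]

theorem heatK_nonneg (n : ℕ) {t : ℝ} (ht : 0 ≤ t) (x y : EuclideanSpace ℝ (Fin n)) :
    0 ≤ heatK n t x y :=
  mul_nonneg (rpow_nonneg (by positivity) _) (exp_nonneg _)

theorem heatK_eq_rpow_mul_exp_mul_heatK (n : ℕ) {a b : ℝ} (ha : 0 < a) (hb : 0 < b)
    (x y : EuclideanSpace ℝ (Fin n)) :
    heatK n a x y = (b / a) ^ ((n : ℝ) / 2) *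
      exp (‖x - y‖ ^ 2 / (4 * b) - ‖x - y‖ ^ 2 / (4 * a)) * heatK n b x y := by
  have hpre : (4 * π * a) ^ (-(n : ℝ) / 2) =
      (b / a) ^ ((n : ℝ) / 2) * (4 * π * b) ^ (-(n : ℝ) / 2) := by
    rw [neg_div, mul_comm ((b / a) ^ _), ← div_rpow_neg (by positivity) (by positivity)]
    congr 1
    field_simp
  have hexp : exp (-‖x - y‖ ^ 2 / (4 * a)) = exp (‖x - y‖ ^ 2 / (4 * b) -
      ‖x - y‖ ^ 2 / (4 * a)) * exp (-‖x - y‖ ^ 2 / (4 * b)) := by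
    rw [← exp_add]
    ring_nf
  rw [heatK, heatK, hpre, hexp]
  ring

theorem heatK_le_rpow_mul_heatK (n : ℕ) {a b : ℝ} (ha : 0 < a) (hab : a ≤ b)
    (x y : EuclideanSpace ℝ (Fin n)) :
    heatK n a x y ≤ (b / a) ^ ((n : ℝ) / 2) * heatK n b x y := by
  have hb := ha.trans_le hab
  have hexp : exp (‖x - y‖ ^ 2 / (4 * b) - ‖x - y‖ ^ 2 / (4 * a)) ≤ 1 :=
    exp_le_one_iff.mpr (sub_nonpos.mpr (by gcongr))
  rw [heatK_eq_rpow_mul_exp_mul_heatK n ha hb, mul_right_comm]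
  exact mul_le_of_le_one_right
    (mul_nonneg (rpow_nonneg (by positivity) _) (heatK_nonneg n hb.le x y)) hexp

theorem heatK_mul_norm_sub_pow_le (n m : ℕ) {p τ : ℝ} (hp : 0 < p) (hτ : 0 < τ)
    (x y : EuclideanSpace ℝ (Fin n)) :
    heatK n τ x y * ‖x - y‖ ^ m ≤ (1 + p) ^ ((n : ℝ) / 2) * (1 + m !) *
      √(4 * (1 + p) * τ / p) ^ m * heatK n ((1 + p) * τ) x y := by
  have hexp : ‖x - y‖ ^ 2 / (4 * ((1 + p) * τ)) - ‖x - y‖ ^ 2 / (4 * τ) =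
      -‖x - y‖ ^ 2 / (4 * (1 + p) * τ / p) := by
    field_simp
    ring
  have hratio : (1 + p) * τ / τ = 1 + p := by field_simp
  have hK := heatK_nonneg n (by positivity : 0 ≤ (1 + p) * τ) x y
  rw [heatK_eq_rpow_mul_exp_mul_heatK n hτ (b := (1 + p) * τ) (by positivity), hexp, hratio]
  calc _ = (1 + p) ^ ((n : ℝ) / 2) * (‖x - y‖ ^ m * exp (-‖x - y‖ ^ 2 / (4 * (1 + p) * τ / p))) *
        heatK n ((1 + p) * τ) x y := by ring
    _ ≤ (1 + p) ^ ((n : ℝ) / 2) * ((1 + m !) * √(4 * (1 + p) * τ / p) ^ m) *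
        heatK n ((1 + p) * τ) x y := by
      gcongr _ * ?_ * _
      exact pow_mul_exp_neg_sq_div_le m (by positivity) _
    _ = _ := by ring

theorem integrable_exp_neg_mul_sq_norm {V : Type*} [NormedAddCommGroup V] [InnerProductSpace ℝ V]
    [FiniteDimensional ℝ V] [MeasurableSpace V] [BorelSpace V] {β : ℝ} (hβ : 0 < β) :
    Integrable (fun v : V ↦ exp (-β * ‖v‖ ^ 2)) := by
  refine (GaussianFourier.integrable_cexp_neg_mul_sq_norm_add (V := V) (b := β)
    (by simpa using hβ) 0 0).norm.congr (ae_of_all _ fun v ↦ ?_)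
  simp only [zero_mul, add_zero, Complex.norm_exp]
  norm_cast

theorem heatK_zero_mul_heatK (n : ℕ) {a b : ℝ} (ha : 0 < a) (hb : 0 < b)
    (x y : EuclideanSpace ℝ (Fin n)) :
    heatK n a 0 y * heatK n b y x =
      (4 * π * a) ^ (-(n : ℝ) / 2) * (4 * π * b) ^ (-(n : ℝ) / 2) *
        exp (-‖x‖ ^ 2 / (4 * (a + b))) *
        exp (-((a + b) / (4 * a * b)) * ‖y - (a / (a + b)) • x‖ ^ 2) := by
  have hsq : ‖y - (a / (a + b)) • x‖ ^ 2 =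
      ‖y‖ ^ 2 - 2 * (a / (a + b)) * inner ℝ y x + (a / (a + b)) ^ 2 * ‖x‖ ^ 2 := by
    rw [norm_sub_sq_real, real_inner_smul_right, norm_smul, norm_of_nonneg (by positivity),
      mul_pow]
    ring
  have hexp : -‖0 - y‖ ^ 2 / (4 * a) + -‖y - x‖ ^ 2 / (4 * b) = -‖x‖ ^ 2 / (4 * (a + b)) +
      -((a + b) / (4 * a * b)) * ‖y - (a / (a + b)) • x‖ ^ 2 := by
    rw [hsq, zero_sub, norm_neg, norm_sub_sq_real]
    field_simp
    ring
  simp only [heatK]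
  rw [mul_mul_mul_comm, ← exp_add, hexp, exp_add]
  ring

theorem integrable_heatK_zero_mul_heatK (n : ℕ) {a b : ℝ} (ha : 0 < a) (hb : 0 < b)
    (x : EuclideanSpace ℝ (Fin n)) :
    Integrable (fun y ↦ heatK n a 0 y * heatK n b y x) := by
  simp_rw [heatK_zero_mul_heatK n ha hb x]
  exact ((integrable_exp_neg_mul_sq_norm (by positivity)).comp_sub_right _).const_mul _

theorem integral_heatK_zero_mul_heatK (n : ℕ) {a b : ℝ} (ha : 0 < a) (hb : 0 < b)
    (x : EuclideanSpace ℝ (Fin n)) :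
    ∫ y, heatK n a 0 y * heatK n b y x = heatK n (a + b) 0 x := by
  have hβ : 0 < (a + b) / (4 * a * b) := by positivity
  have hpre : (4 * π * a) ^ (-(n : ℝ) / 2) * (4 * π * b) ^ (-(n : ℝ) / 2) *
      (π / ((a + b) / (4 * a * b))) ^ ((n : ℝ) / 2) = (4 * π * (a + b)) ^ (-(n : ℝ) / 2) := by
    rw [neg_div, ← mul_rpow (by positivity) (by positivity), ← div_rpow_neg (by positivity)
      (by positivity)]
    congr 1
    field_simp
  simp_rw [heatK_zero_mul_heatK n ha hb x]
  rw [integral_const_mul,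
    integral_sub_right_eq_self (fun y ↦ exp (-((a + b) / (4 * a * b)) * ‖y‖ ^ 2)),
    GaussianFourier.integral_rexp_neg_mul_sq_norm hβ, finrank_euclideanSpace_fin, heatK, zero_sub,
    norm_neg, ← hpre]
  ring

theorem integral_heatK_mul_norm_pow_mul_heatK_le (n m : ℕ) {p a b : ℝ} (hp : 0 < p) (ha : 0 < a)
    (hb : 0 < b) (x : EuclideanSpace ℝ (Fin n)) :
    ∫ y, heatK n a 0 y * ‖y‖ ^ m * heatK n b y x ≤ (1 + p) ^ ((n : ℝ) / 2) * (1 + m !) *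
      √(4 * (1 + p) * a / p) ^ m * heatK n ((1 + p) * a + b) 0 x := by
  have habsorb : ∀ y, heatK n a 0 y * ‖y‖ ^ m * heatK n b y x ≤
      (1 + p) ^ ((n : ℝ) / 2) * (1 + m !) * √(4 * (1 + p) * a / p) ^ m *
        (heatK n ((1 + p) * a) 0 y * heatK n b y x) := fun y ↦ by
    have := heatK_mul_norm_sub_pow_le n m hp ha 0 y
    rw [zero_sub, norm_neg] at this
    rw [← mul_assoc]
    exact mul_le_mul_of_nonneg_right this (heatK_nonneg n hb.le y x)
  rw [← integral_heatK_zero_mul_heatK n (by positivity) hb, ← integral_const_mul]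
  refine integral_mono_of_nonneg (ae_of_all _ fun y ↦ ?_)
    ((integrable_heatK_zero_mul_heatK n (by positivity) hb x).const_mul _) (ae_of_all _ habsorb)
  have := heatK_nonneg n ha.le 0 y
  have := heatK_nonneg n hb.le y x
  positivity

theorem exists_integral_heatK_mul_norm_pow_mul_heatK_le (n m : ℕ) {p : ℝ} (hp : 0 < p) :
    ∃ c > 0, ∀ {s t : ℝ}, 0 < s → s < t → ∀ x : EuclideanSpace ℝ (Fin n),
      ∫ y, heatK n (t - s) 0 y * ‖y‖ ^ m * heatK n (p * s) y x ≤
        c * √t ^ m * heatK n ((1 + p) * t) 0 x := by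
  refine ⟨(1 + p) ^ ((n : ℝ) / 2) * (1 + m !) * √(4 * (1 + p) / p) ^ m *
    ((1 + p) / p) ^ ((n : ℝ) / 2), by positivity, fun {s t} hs hst x ↦ ?_⟩
  have hsqrt : √(4 * (1 + p) * (t - s) / p) ≤ √(4 * (1 + p) / p) * √t := by
    rw [← sqrt_mul (by positivity), mul_div_right_comm]
    gcongr
    linarith
  have ht : 0 < t := hs.trans hst
  have hgap : 0 < (1 + p) * t - s := by nlinarith
  have hratio : (1 + p) * t / ((1 + p) * t - s) ≤ (1 + p) / p := by
    rw [div_le_div_iff₀ hgap hp]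
    nlinarith
  have hmono : heatK n ((1 + p) * t - s) 0 x ≤
      ((1 + p) / p) ^ ((n : ℝ) / 2) * heatK n ((1 + p) * t) 0 x :=
    (heatK_le_rpow_mul_heatK n hgap (by linarith) 0 x).trans <|
      mul_le_mul_of_nonneg_right (rpow_le_rpow (by positivity) hratio (by positivity))
        (heatK_nonneg n (by positivity) 0 x)
  have hK := heatK_nonneg n hgap.le 0 x
  calc _ ≤ (1 + p) ^ ((n : ℝ) / 2) * (1 + m !) * √(4 * (1 + p) * (t - s) / p) ^ m *
        heatK n ((1 + p) * (t - s) + p * s) 0 x :=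
      integral_heatK_mul_norm_pow_mul_heatK_le n m hp (by linarith) (by positivity) x
    _ ≤ (1 + p) ^ ((n : ℝ) / 2) * (1 + m !) * (√(4 * (1 + p) / p) * √t) ^ m *
        (((1 + p) / p) ^ ((n : ℝ) / 2) * heatK n ((1 + p) * t) 0 x) := by
      rw [show (1 + p) * (t - s) + p * s = (1 + p) * t - s by ring]
      gcongr
    _ = _ := by ring

/-- Gaussian convolution estimate: for every `m ≥ 0` and `p > 0` there is `c_{m,p}`,
independent of `x` and `t > 0`, with
`∫₀^t ∫ K(t−s; 0, y) |y|^m K(ps; y, x) dy ds ≤ c_{m,p} t^{1+m/2} K((1+p)t; 0, x)`. -/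
theorem heat_kernel_convolution_estimate (n m : ℕ) (p : ℝ) (hp : 0 < p) :
    ∃ c : ℝ, 0 < c ∧ ∀ t : ℝ, 0 < t → ∀ x : EuclideanSpace ℝ (Fin n),
      (∫ s in (0:ℝ)..t, ∫ y : EuclideanSpace ℝ (Fin n),
          heatK n (t - s) 0 y * ‖y‖ ^ m * heatK n (p * s) y x) ≤
        c * t ^ (1 + (m : ℝ) / 2) * heatK n ((1 + p) * t) 0 x := by
  obtain ⟨c, hc, hslice⟩ := exists_integral_heatK_mul_norm_pow_mul_heatK_le n m hp
  refine ⟨c, hc, fun t ht x ↦ ?_⟩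
  have hbound : ∀ᵐ s, s ∈ Set.uIoc 0 t →
      ‖∫ y, heatK n (t - s) 0 y * ‖y‖ ^ m * heatK n (p * s) y x‖ ≤
        c * √t ^ m * heatK n ((1 + p) * t) 0 x := by
    -- `heatK n 0` is a junk value, so the endpoint `s = t` has to be discarded
    filter_upwards [Measure.ae_ne volume t] with s hst hs
    rw [Set.uIoc_of_le ht.le] at hs
    rw [norm_of_nonneg (integral_nonneg fun y ↦ ?_)]
    · exact hslice hs.1 (lt_of_le_of_ne hs.2 hst) x
    · have := heatK_nonneg n (sub_nonneg.mpr hs.2) 0 y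
      have := heatK_nonneg n (mul_nonneg hp.le hs.1.le) y x
      positivity
  calc _ ≤ ‖∫ s in (0:ℝ)..t, ∫ y, heatK n (t - s) 0 y * ‖y‖ ^ m * heatK n (p * s) y x‖ :=
        le_norm_self _
    _ ≤ c * √t ^ m * heatK n ((1 + p) * t) 0 x * |t - 0| :=
        intervalIntegral.norm_integral_le_of_norm_le_const_ae hbound
    _ = _ := by
      rw [sub_zero, abs_of_pos ht, rpow_add ht, rpow_one, rpow_div_two_eq_sqrt _ ht.le, rpow_natCast]
      ring
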